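/- For every (x,y) ∈ ℝ², the Jacobian determinant of the Pinchuk map F = (P,Q) is strictly positive; equivalently, there is no (x,y) ∈ ℝ² with t(x,y) = 0 and f(x,y) = 0 simultaneously, so t² + (t + f·(13 + 15h))² + f² > 0 everywhere. -/

import Mathlib

/-- `t = xy − 1`. -/
noncomputable def tF (x y : ℝ) : ℝ := x * y - 1

/-- `h = t(xt + 1)`. -/
noncomputable def hF (x y : ℝ) : ℝ := tF x y * (x * tF x y + 1)

/-- `f = (xt + 1)²(t² + y)`. -/
noncomputable def fF (x y : ℝ) : ℝ := (x * tF x y + 1) ^ 2 * (tF x y ^ 2 + y)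

/-- `P = f + h`. -/
noncomputable def PF (x y : ℝ) : ℝ := fF x y + hF x y

/-- The auxiliary polynomial `u(f,h)`. -/
noncomputable def uF (f h : ℝ) : ℝ :=
  170 * f * h + 91 * h ^ 2 + 195 * f * h ^ 2 + 69 * h ^ 3 + 75 * f * h ^ 3 + (75 / 4) * h ^ 4

/-- `Q = −t² − 6th(h + 1) − u(f,h)`. -/
noncomputable def QF (x y : ℝ) : ℝ :=
  -tF x y ^ 2 - 6 * tF x y * hF x y * (hF x y + 1) - uF (fF x y) (hF x y)

/-- The Jacobian determinant of the Pinchuk map `F = (P,Q)` at `(x,y)`. -/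
noncomputable def jacF (x y : ℝ) : ℝ :=
  deriv (fun x' => PF x' y) x * deriv (fun y' => QF x y') y -
    deriv (fun y' => PF x y') y * deriv (fun x' => QF x' y) x


/-!
The Jacobian is identically `t² + (t + f(13 + 15h))² + f²`: differentiate `P = f + h` and
`Q = q(t, f, h)` by the chain rule through `(t, f, h)` and compare polynomials. This sum of squares
vanishes only where `t = f = 0`, which is impossible: `t = 0` means `xy = 1`, so `xt + 1 = 1` and
`f = y ≠ 0`.
-/

section ChainRule

variable {T F H : ℝ → ℝ} {T' F' H' s : ℝ}

theorem HasDerivAt.uF_comp (hF : HasDerivAt F F' s) (hH : HasDerivAt H H' s) :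
    HasDerivAt (fun s => uF (F s) (H s))
      ((170 * H s + 195 * H s ^ 2 + 75 * H s ^ 3) * F' +
        (170 * F s + 182 * H s + 390 * F s * H s + 207 * H s ^ 2 + 225 * F s * H s ^ 2 +
          75 * H s ^ 3) * H') s := by
  unfold uF
  have h := ((((((hF.const_mul 170).fun_mul hH).fun_add ((hH.fun_pow 2).const_mul 91)).fun_add
    ((hF.const_mul 195).fun_mul (hH.fun_pow 2))).fun_add ((hH.fun_pow 3).const_mul 69)).fun_add
    ((hF.const_mul 75).fun_mul (hH.fun_pow 3))).fun_add ((hH.fun_pow 4).const_mul (75 / 4))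
  exact h.congr_deriv (by ring)

theorem HasDerivAt.pinchukQ (hT : HasDerivAt T T' s) (hF : HasDerivAt F F' s)
    (hH : HasDerivAt H H' s) :
    HasDerivAt (fun s => -T s ^ 2 - 6 * T s * H s * (H s + 1) - uF (F s) (H s))
      (-(2 * T s * T') - 6 * (T' * H s * (H s + 1) + T s * (2 * H s + 1) * H') -
        ((170 * H s + 195 * H s ^ 2 + 75 * H s ^ 3) * F' +
          (170 * F s + 182 * H s + 390 * F s * H s + 207 * H s ^ 2 + 225 * F s * H s ^ 2 +
            75 * H s ^ 3) * H')) s := by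
  have h := ((hT.fun_pow 2).fun_neg.fun_sub
    (((hT.const_mul 6).fun_mul hH).fun_mul (hH.add_const 1))).fun_sub (hF.uF_comp hH)
  exact h.congr_deriv (by ring)

end ChainRule

section Slices

variable (x y : ℝ)

theorem hasDerivAt_tF_left : HasDerivAt (fun x' => tF x' y) y x :=
  ((hasDerivAt_id' x).mul_const y).sub_const 1 |>.congr_deriv (one_mul y)

theorem hasDerivAt_tF_right : HasDerivAt (fun y' => tF x y') x y :=
  ((hasDerivAt_id' y).const_mul x).sub_const 1 |>.congr_deriv (mul_one x)

theorem hasDerivAt_xtF_add_one_left :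
    HasDerivAt (fun x' => x' * tF x' y + 1) (2 * tF x y + 1) x :=
  ((hasDerivAt_id' x).fun_mul (hasDerivAt_tF_left x y)).add_const 1 |>.congr_deriv
    (by unfold tF; ring)

theorem hasDerivAt_xtF_add_one_right :
    HasDerivAt (fun y' => x * tF x y' + 1) (x ^ 2) y :=
  ((hasDerivAt_tF_right x y).const_mul x).add_const 1 |>.congr_deriv (by ring)

theorem hasDerivAt_hF_left :
    HasDerivAt (fun x' => hF x' y) (y * (x * tF x y + 1) + tF x y * (2 * tF x y + 1)) x :=
  (hasDerivAt_tF_left x y).fun_mul (hasDerivAt_xtF_add_one_left x y)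

theorem hasDerivAt_hF_right :
    HasDerivAt (fun y' => hF x y') (x * (x * tF x y + 1) + tF x y * x ^ 2) y :=
  (hasDerivAt_tF_right x y).fun_mul (hasDerivAt_xtF_add_one_right x y)

theorem hasDerivAt_fF_left :
    HasDerivAt (fun x' => fF x' y)
      (2 * (x * tF x y + 1) * (2 * tF x y + 1) * (tF x y ^ 2 + y) +
        (x * tF x y + 1) ^ 2 * (2 * tF x y * y)) x :=
  ((hasDerivAt_xtF_add_one_left x y).fun_pow 2).fun_mul
    (((hasDerivAt_tF_left x y).fun_pow 2).add_const y) |>.congr_deriv (by ring)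

theorem hasDerivAt_fF_right :
    HasDerivAt (fun y' => fF x y')
      (2 * (x * tF x y + 1) * x ^ 2 * (tF x y ^ 2 + y) +
        (x * tF x y + 1) ^ 2 * (2 * tF x y * x + 1)) y :=
  ((hasDerivAt_xtF_add_one_right x y).fun_pow 2).fun_mul
    (((hasDerivAt_tF_right x y).fun_pow 2).fun_add (hasDerivAt_id' y)) |>.congr_deriv (by ring)

end Slices

theorem jacF_eq (x y : ℝ) :
    jacF x y = tF x y ^ 2 + (tF x y + fF x y * (13 + 15 * hF x y)) ^ 2 + fF x y ^ 2 := by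
  have hPx : HasDerivAt (fun x' => PF x' y) _ x :=
    (hasDerivAt_fF_left x y).fun_add (hasDerivAt_hF_left x y)
  have hPy : HasDerivAt (fun y' => PF x y') _ y :=
    (hasDerivAt_fF_right x y).fun_add (hasDerivAt_hF_right x y)
  have hQx : HasDerivAt (fun x' => QF x' y) _ x :=
    (hasDerivAt_tF_left x y).pinchukQ (hasDerivAt_fF_left x y) (hasDerivAt_hF_left x y)
  have hQy : HasDerivAt (fun y' => QF x y') _ y :=
    (hasDerivAt_tF_right x y).pinchukQ (hasDerivAt_fF_right x y) (hasDerivAt_hF_right x y)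
  rw [jacF, hPx.deriv, hPy.deriv, hQx.deriv, hQy.deriv]
  unfold fF hF tF
  ring

theorem fF_ne_zero_of_tF_eq_zero {x y : ℝ} (ht : tF x y = 0) : fF x y ≠ 0 := by
  have hxy : x * y = 1 := sub_eq_zero.mp ht
  have hy : y ≠ 0 := right_ne_zero_of_mul_eq_one hxy
  simpa [fF, ht] using hy

theorem jacobian_sum_sq_pos (x y : ℝ) :
    0 < tF x y ^ 2 + (tF x y + fF x y * (13 + 15 * hF x y)) ^ 2 + fF x y ^ 2 := by
  by_cases ht : tF x y = 0
  · have hf := fF_ne_zero_of_tF_eq_zero ht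
    positivity
  · positivity

theorem pinchuk_jacobian_positive :
    (∀ x y : ℝ, 0 < jacF x y) ∧
    (¬ ∃ x y : ℝ, tF x y = 0 ∧ fF x y = 0) ∧
    (∀ x y : ℝ,
      0 < tF x y ^ 2 + (tF x y + fF x y * (13 + 15 * hF x y)) ^ 2 + fF x y ^ 2) :=
  ⟨fun x y => jacF_eq x y ▸ jacobian_sum_sq_pos x y,
    fun ⟨_, _, ht, hf⟩ => fF_ne_zero_of_tF_eq_zero ht hf, jacobian_sum_sq_pos⟩
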